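/- With the path-family decomposition (for each path π_i ∈ Π, A_i the tree edges on π_i and B_i the non-tree edges f whose tree-path decomposition uses π_i), a pair (e,f) is a swap for T if and only if there exists an index i with e ∈ A_i and f ∈ B_i. Consequently, a parameter vector p makes T the unique minimum spanning tree if and only if for every i, every edge of A_i has weight strictly less than every edge of B_i under p. -/

import Mathlib

open SimpleGraph
open scoped Classical

/-- Dot product on `ℝ^d`. -/
def dot {d : ℕ} (x y : Fin d → ℝ) : ℝ := ∑ i, x i * y i

/-- `T` is a spanning tree of `G`. -/
def IsSpanningTree {V : Type*} (G T : SimpleGraph V) : Prop :=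
  T ≤ G ∧ T.IsTree

/-- `(e, f)` is a swap for the spanning tree `T` of `G`. -/
def IsSwap {V : Type*} (G T : SimpleGraph V) (e f : Sym2 V) : Prop :=
  e ∈ T.edgeSet ∧ f ∈ G.edgeSet ∧ f ∉ T.edgeSet ∧
    IsSpanningTree G (SimpleGraph.fromEdgeSet ((insert f T.edgeSet) \ {e}))

open scoped Classical in
/-- Total parametric weight of (the edges of) a graph. -/
noncomputable def paramWeight {V : Type*} [Fintype V] {d : ℕ} (T : SimpleGraph V)
    (cost : Sym2 V → Fin d → ℝ) (p : Fin d → ℝ) : ℝ :=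
  ∑ e ∈ T.edgeFinset, dot (cost e) p

/-!
For a non-tree edge `f = s(u, v)`, the graph `T + f - e` is a spanning tree exactly when `e` lies
on the tree path `P` from `u` to `v`: if it does, `T - e` no longer joins `u` to `v`, so adding
`f` creates no cycle, while `e` lies on the cycle `f + P` of `T + f`, so deleting it keeps the
graph connected; if it does not, `f + P` is a cycle of `T + f - e`. Since `P` is the
union of the paths `π_i`, `i ∈ D f`, this is the first claim.

For the second, a swap changes the weight by `w f - w e`, which gives one direction. Conversely,
a spanning tree `T' ≠ T` has an edge `f ∉ T`; the tree path of `f` in `T` crosses the cut of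
`T' - f` in an edge `e`, and then `(e, f)` is a swap for `T` and `(f, e)` one for `T'`. So
`T' + e - f` is lighter than `T'` and shares one more edge with `T`: induct on `|T' \ T|`.
-/

namespace SimpleGraph

variable {V : Type*} {T : SimpleGraph V}

theorem IsAcyclic.reachable_deleteEdges_iff (hT : T.IsAcyclic) {u v : V} {p : T.Walk u v}
    (hp : p.IsPath) {e : Sym2 V} :
    (T.deleteEdges {e}).Reachable u v ↔ e ∉ p.edges := by
  refine ⟨fun ⟨q⟩ he => ?_, fun he => ⟨p.toDeleteEdge e he⟩⟩
  let r : T.Path u v := ⟨(q.mapLe (T.deleteEdges_le _)).bypass, Walk.bypass_isPath _⟩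
  have hpr : p = r := congrArg Subtype.val ((hT.subsingleton_path u v).elim ⟨p, hp⟩ r)
  have hq : e ∈ q.edges := by
    rw [← Walk.edges_mapLe_eq_edges (T.deleteEdges_le _)]
    exact Walk.edges_bypass_subset_edges _ (by rwa [hpr] at he)
  simpa [edgeSet_deleteEdges] using q.edges_subset_edgeSet hq

theorem isAcyclic_deleteEdges_sup_edge_iff (hT : T.IsAcyclic) {u v : V} {p : T.Walk u v}
    (hp : p.IsPath) (huv : u ≠ v) (hadj : ¬ T.Adj u v) {e : Sym2 V} :
    (T.deleteEdges {e} ⊔ edge u v).IsAcyclic ↔ e ∈ p.edges := by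
  rw [isAcyclic_sup_fromEdgeSet_iff, hT.reachable_deleteEdges_iff hp]
  simp [hT.anti (T.deleteEdges_le _), huv, hadj]

theorem Connected.deleteEdges_sup_edge {u v : V} (hT : T.Connected) {p : T.Walk u v}
    (hp : p.IsPath) (hadj : ¬ T.Adj u v) {e : Sym2 V} (he : e ∈ p.edges) :
    (T.deleteEdges {e} ⊔ edge u v).Connected := by
  have huv : u ≠ v := by
    rintro rfl
    simp [Walk.edges_eq_nil.2 (Walk.isPath_iff_nil.1 hp)] at he
  set H := T ⊔ edge u v
  have hcycle : (Walk.cons (by simp [H, edge_adj, huv.symm] : H.Adj v u)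
      (p.mapLe le_sup_left)).IsCycle := by
    rw [Walk.cons_isCycle_iff, Walk.edges_mapLe_eq_edges, Sym2.eq_swap]
    exact ⟨hp.mapLe _, fun h => hadj (p.adj_of_mem_edges h)⟩
  have hbridge : ¬ H.IsBridge e := by
    intro hb
    apply hb.notMem_edges_of_isCycle hcycle
    simp [he]
  have hne : e ≠ s(u, v) := fun h => hadj (p.adj_of_mem_edges (h ▸ he))
  induction e with | h a b =>
  have := (hT.mono le_sup_left).connected_delete_edge_of_not_isBridge hbridge
  rwa [deleteEdges_sup, (edge u v).deleteEdges_eq_self.2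
    (by simpa [edgeSet_edge_of_ne huv] using hne.symm)] at this

theorem IsTree.isTree_deleteEdges_sup_edge_iff (hT : T.IsTree) {u v : V} {p : T.Walk u v}
    (hp : p.IsPath) (huv : u ≠ v) (hadj : ¬ T.Adj u v) {e : Sym2 V} :
    (T.deleteEdges {e} ⊔ edge u v).IsTree ↔ e ∈ p.edges :=
  ⟨fun h => (isAcyclic_deleteEdges_sup_edge_iff hT.isAcyclic hp huv hadj).1 h.isAcyclic,
    fun he => ⟨hT.connected.deleteEdges_sup_edge hp hadj he,
      (isAcyclic_deleteEdges_sup_edge_iff hT.isAcyclic hp huv hadj).2 he⟩⟩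

end SimpleGraph

section Swap

variable {V : Type*} {G T : SimpleGraph V}

def swapGraph (T : SimpleGraph V) (e f : Sym2 V) : SimpleGraph V :=
  fromEdgeSet (insert f T.edgeSet \ {e})

theorem swapGraph_eq_deleteEdges_sup_edge {e : Sym2 V} {u v : V} (he : e ≠ s(u, v)) :
    swapGraph T e s(u, v) = T.deleteEdges {e} ⊔ edge u v := by
  ext x y
  simp only [swapGraph, fromEdgeSet_adj, Set.mem_sdiff, Set.mem_insert_iff, mem_edgeSet,
    Set.mem_singleton_iff, sup_adj, deleteEdges_adj, edge_adj]
  grind [T.ne_of_adj]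

theorem isSwap_iff_mem_edges (hT : IsSpanningTree G T) {u v : V} {p : T.Walk u v} (hp : p.IsPath)
    {e : Sym2 V} :
    IsSwap G T e s(u, v) ↔ s(u, v) ∈ G.edgeSet ∧ s(u, v) ∉ T.edgeSet ∧ e ∈ p.edges := by
  constructor
  · rintro ⟨heT, hfG, hfT, -, htree⟩
    refine ⟨hfG, hfT, ?_⟩
    rw [← hT.2.isTree_deleteEdges_sup_edge_iff hp (G.ne_of_adj hfG) hfT,
      ← swapGraph_eq_deleteEdges_sup_edge (ne_of_mem_of_not_mem heT hfT)]
    exact htree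
  · rintro ⟨hfG, hfT, he⟩
    have heT := p.edges_subset_edgeSet he
    have hswap : swapGraph T e s(u, v) = _ :=
      swapGraph_eq_deleteEdges_sup_edge (ne_of_mem_of_not_mem heT hfT)
    refine ⟨heT, hfG, hfT, ?_, ?_⟩
    · change swapGraph T e s(u, v) ≤ G
      rw [hswap]
      exact sup_le ((T.deleteEdges_le _).trans hT.1) (by simp [hfG])
    · change (swapGraph T e s(u, v)).IsTree
      rwa [hswap, hT.2.isTree_deleteEdges_sup_edge_iff hp (G.ne_of_adj hfG) hfT]

theorem IsSpanningTree.exists_isSwap_isSwap {T' : SimpleGraph V} (hT : IsSpanningTree G T)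
    (hT' : IsSpanningTree G T') {f : Sym2 V} (hfT' : f ∈ T'.edgeSet) (hfT : f ∉ T.edgeSet) :
    ∃ e, IsSwap G T e f ∧ IsSwap G T' f e := by
  induction f using Sym2.ind with | h u v =>
  obtain ⟨p, hp, -⟩ := hT.2.existsUnique_path u v
  set S := {x | (T'.deleteEdges {s(u, v)}).Reachable u x}
  have hvS : v ∉ S := isAcyclic_iff_forall_isBridge.1 hT'.2.isAcyclic hfT'
  obtain ⟨⟨⟨a, b⟩, hab⟩, hd, haS, hbS⟩ :=
    p.exists_boundary_dart S (Reachable.refl _) hvS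
  have hnot : ¬ (T'.deleteEdges {s(u, v)}).Reachable a b := fun h => hbS (haS.trans h)
  obtain ⟨q, hq, -⟩ := hT'.2.existsUnique_path a b
  refine ⟨s(a, b), (isSwap_iff_mem_edges hT hp).2 ⟨hT'.1 hfT', hfT, List.mem_map_of_mem hd⟩,
    (isSwap_iff_mem_edges hT' hq).2
      ⟨hT.1 hab, fun habT' => hnot ?_, by_contra fun h => hnot ?_⟩⟩
  · have hne : s(a, b) ≠ s(u, v) := ne_of_mem_of_not_mem (hab : s(a, b) ∈ T.edgeSet) hfT
    exact (deleteEdges_adj.2 ⟨habT', hne⟩).reachable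
  · exact (hT'.2.isAcyclic.reachable_deleteEdges_iff hq).2 h

theorem IsSwap.isSpanningTree_swapGraph {e f : Sym2 V} (h : IsSwap G T e f) :
    IsSpanningTree G (swapGraph T e f) :=
  h.2.2.2

theorem IsSwap.edgeFinset_swapGraph [Fintype V] {e f : Sym2 V} (h : IsSwap G T e f) :
    (swapGraph T e f).edgeFinset = insert f (T.edgeFinset.erase e) := by
  obtain ⟨heT, hfG, hfT, -⟩ := h
  ext x
  rw [mem_edgeFinset, swapGraph, edgeSet_fromEdgeSet]
  simp only [Set.mem_sdiff, Set.mem_insert_iff, Set.mem_singleton_iff, Sym2.mem_diagSet,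
    Finset.mem_insert, Finset.mem_erase, mem_edgeFinset]
  grind [G.not_isDiag_of_mem_edgeSet, T.not_isDiag_of_mem_edgeSet]

theorem IsSwap.swapGraph_ne {e f : Sym2 V} (h : IsSwap G T e f) : swapGraph T e f ≠ T := by
  obtain ⟨heT, hfG, hfT, -⟩ := h
  intro heq
  apply hfT
  rw [← heq, swapGraph, edgeSet_fromEdgeSet]
  exact ⟨⟨Set.mem_insert _ _, (ne_of_mem_of_not_mem heT hfT).symm⟩,
    G.not_isDiag_of_mem_edgeSet hfG⟩

theorem IsSwap.sum_swapGraph_add [Fintype V] {M : Type*} [AddCommMonoid M] {e f : Sym2 V}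
    (h : IsSwap G T e f) (w : Sym2 V → M) :
    ∑ x ∈ (swapGraph T e f).edgeFinset, w x + w e = ∑ x ∈ T.edgeFinset, w x + w f := by
  have he : e ∈ T.edgeFinset := mem_edgeFinset.2 h.1
  have hf : f ∉ T.edgeFinset.erase e := fun hf =>
    h.2.2.1 (mem_edgeFinset.1 (Finset.mem_of_mem_erase hf))
  rw [h.edgeFinset_swapGraph, Finset.sum_insert hf, add_assoc, Finset.sum_erase_add _ _ he,
    add_comm]

section Weight

variable [Fintype V] {M : Type*} [AddCommMonoid M] [LinearOrder M] [IsOrderedCancelAddMonoid M]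
  (w : Sym2 V → M)

theorem IsSpanningTree.sum_lt_of_forall_isSwap (hT : IsSpanningTree G T)
    (hw : ∀ e f, IsSwap G T e f → w e < w f) {T' : SimpleGraph V} (hT' : IsSpanningTree G T')
    (hne : T' ≠ T) : ∑ x ∈ T.edgeFinset, w x < ∑ x ∈ T'.edgeFinset, w x := by
  induction hn : (T'.edgeFinset \ T.edgeFinset).card using Nat.strong_induction_on
    generalizing T' with | _ n ih =>
  obtain ⟨f, hfT', hfT⟩ : ∃ f ∈ T'.edgeSet, f ∉ T.edgeSet := by
    by_contra! hsub
    exact hne ((isTree_iff_minimal_connected.1 hT.2).eq_of_le hT'.2.connected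
      (edgeSet_subset_edgeSet.1 hsub))
  obtain ⟨e, hs, hs'⟩ := hT.exists_isSwap_isSwap hT' hfT' hfT
  have hlt : ∑ x ∈ (swapGraph T' f e).edgeFinset, w x < ∑ x ∈ T'.edgeFinset, w x := by
    refine lt_of_add_lt_add_right (a := w f) ?_
    rw [hs'.sum_swapGraph_add w]
    exact add_lt_add_right (hw e f hs) _
  by_cases heq : swapGraph T' f e = T
  · rwa [heq] at hlt
  refine (ih _ ?_ hs'.isSpanningTree_swapGraph heq rfl).trans hlt
  rw [← hn, hs'.edgeFinset_swapGraph, Finset.insert_sdiff_of_mem _ (mem_edgeFinset.2 hs.1),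
    Finset.erase_sdiff_comm]
  exact Finset.card_erase_lt_of_mem (Finset.mem_sdiff.2 ⟨mem_edgeFinset.2 hfT', by simpa⟩)

theorem IsSpanningTree.forall_sum_lt_iff_forall_isSwap (hT : IsSpanningTree G T) :
    (∀ T', IsSpanningTree G T' → T' ≠ T →
      ∑ x ∈ T.edgeFinset, w x < ∑ x ∈ T'.edgeFinset, w x) ↔
    ∀ e f, IsSwap G T e f → w e < w f := by
  refine ⟨fun hmin e f hs => ?_, fun hw _ => hT.sum_lt_of_forall_isSwap w hw⟩
  refine lt_of_add_lt_add_left (a := ∑ x ∈ T.edgeFinset, w x) ?_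
  rw [← hs.sum_swapGraph_add w]
  exact add_lt_add_left (hmin _ hs.isSpanningTree_swapGraph hs.swapGraph_ne) _

end Weight

theorem isSwap_iff_exists_of_edges_eq_biUnion {ι : Type*} [DecidableEq (Sym2 V)]
    (hT : IsSpanningTree G T) (Pi : ι → Finset (Sym2 V)) (D : Sym2 V → Finset ι)
    (hdecomp : ∀ f ∈ G.edgeSet, f ∉ T.edgeSet → ∀ u v : V, f = s(u, v) →
      ∀ p : T.Walk u v, p.IsPath → p.edges.toFinset = (D f).biUnion Pi) (e f : Sym2 V) :
    IsSwap G T e f ↔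
      ∃ i, e ∈ Pi i ∧ (f ∈ G.edgeSet ∧ f ∉ T.edgeSet ∧ i ∈ D f) := by
  induction f using Sym2.ind with | h u v =>
  obtain ⟨p, hp, -⟩ := hT.2.existsUnique_path u v
  rw [isSwap_iff_mem_edges hT hp]
  constructor
  · rintro ⟨hfG, hfT, he⟩
    obtain ⟨i, hi, hei⟩ := Finset.mem_biUnion.1
      (hdecomp _ hfG hfT u v rfl p hp ▸ List.mem_toFinset.2 he)
    exact ⟨i, hei, hfG, hfT, hi⟩
  · rintro ⟨i, hei, hfG, hfT, hi⟩
    exact ⟨hfG, hfT, List.mem_toFinset.1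
      (hdecomp _ hfG hfT u v rfl p hp ▸ Finset.mem_biUnion.2 ⟨i, hi, hei⟩)⟩

end Swap

theorem path_family_swap_characterization_general {V : Type*} [Fintype V] [DecidableEq V]
    {d : ℕ} {ι : Type*}
    (G T : SimpleGraph V) (cost : Sym2 V → Fin d → ℝ)
    (hT : IsSpanningTree G T)
    (Pi : ι → Finset (Sym2 V))
    (D : Sym2 V → Finset ι)
    (hdecomp : ∀ f ∈ G.edgeSet, f ∉ T.edgeSet → ∀ u v : V, f = s(u, v) →
      ∀ p : T.Walk u v, p.IsPath →
        p.edges.toFinset = (D f).biUnion Pi ∧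
        ∀ i ∈ D f, ∀ j ∈ D f, i ≠ j → Disjoint (Pi i) (Pi j)) :
    (∀ e f : Sym2 V, IsSwap G T e f ↔
        ∃ i : ι, e ∈ Pi i ∧ (f ∈ G.edgeSet ∧ f ∉ T.edgeSet ∧ i ∈ D f)) ∧
    (∀ p : Fin d → ℝ,
      (∀ T' : SimpleGraph V, IsSpanningTree G T' → T' ≠ T →
          paramWeight T cost p < paramWeight T' cost p) ↔
        (∀ i : ι, ∀ e ∈ Pi i, ∀ f : Sym2 V,
          f ∈ G.edgeSet → f ∉ T.edgeSet → i ∈ D f →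
            dot (cost e) p < dot (cost f) p)) := by
  have hswap := isSwap_iff_exists_of_edges_eq_biUnion hT Pi D
    fun f hfG hfT u v hf p hp => (hdecomp f hfG hfT u v hf p hp).1
  refine ⟨hswap, fun p => (hT.forall_sum_lt_iff_forall_isSwap fun e => dot (cost e) p).trans ?_⟩
  simp only [hswap]
  exact ⟨fun h i e he f hfG hfT hi => h e f ⟨i, he, hfG, hfT, hi⟩,
    fun h e f ⟨i, he, hfG, hfT, hi⟩ => h i e he f hfG hfT hi⟩

/-- With the path-family decomposition — `Pi i` the (tree-)edge set of path
`π_i ∈ Π`, and for each non-tree edge `f` a set `D f` of indices such that the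
tree path between `f`'s endpoints is the disjoint union of the paths `π_i`,
`i ∈ D f` — letting `A_i = Pi i` and `B_i` be the non-tree edges `f` with
`i ∈ D f`: a pair `(e,f)` is a swap for `T` iff `e ∈ A_i` and `f ∈ B_i` for
some `i`; consequently, a parameter vector `p` makes `T` the unique minimum
spanning tree iff for every `i` each edge of `A_i` is strictly lighter than
each edge of `B_i`. -/
theorem path_family_swap_characterization {V : Type*} [Fintype V] [DecidableEq V]
    {d : ℕ} {ι : Type*} [DecidableEq ι]
    (G T : SimpleGraph V) (cost : Sym2 V → Fin d → ℝ)
    (hG : G.Connected) (hT : IsSpanningTree G T)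
    (Pi : ι → Finset (Sym2 V)) (hPi : ∀ i, Pi i ⊆ T.edgeFinset)
    (D : Sym2 V → Finset ι)
    (hdecomp : ∀ f ∈ G.edgeSet, f ∉ T.edgeSet → ∀ u v : V, f = s(u, v) →
      ∀ p : T.Walk u v, p.IsPath →
        p.edges.toFinset = (D f).biUnion Pi ∧
        ∀ i ∈ D f, ∀ j ∈ D f, i ≠ j → Disjoint (Pi i) (Pi j)) :
    (∀ e f : Sym2 V, IsSwap G T e f ↔
        ∃ i : ι, e ∈ Pi i ∧ (f ∈ G.edgeSet ∧ f ∉ T.edgeSet ∧ i ∈ D f)) ∧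
    (∀ p : Fin d → ℝ,
      (∀ T' : SimpleGraph V, IsSpanningTree G T' → T' ≠ T →
          paramWeight T cost p < paramWeight T' cost p) ↔
        (∀ i : ι, ∀ e ∈ Pi i, ∀ f : Sym2 V,
          f ∈ G.edgeSet → f ∉ T.edgeSet → i ∈ D f →
            dot (cost e) p < dot (cost f) p)) :=
  path_family_swap_characterization_general G T cost hT Pi D hdecomp
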